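/- arXiv:2410.19676 — 5 statements merged into one kernel-verified Lean document; each statement's English description precedes it below -/
import Mathlib

section
/- The polyhedral join product of a join of simplicial complexes is the join of the polyhedral join products: (K,L)^{*(M*N)} = (K,L)^{*M} * (K,L)^{*N}. -/
/-- An (abstract) simplicial complex on the vertex type `V`, given as a
downward closed collection of finite subsets of `V`. -/
def IsCx {V : Type*} (X : Set (Finset V)) : Prop :=
  ∀ ⦃s⦄, s ∈ X → ∀ ⦃t⦄, t ⊆ s → t ∈ X

/-- The vertex set of a collection of faces. -/
def vertSC {V : Type*} (X : Set (Finset V)) : Set V := {v | {v} ∈ X}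

/-- The support (union of all faces) of a collection of faces. -/
def suppSC {V : Type*} (X : Set (Finset V)) : Set V := ⋃ s ∈ X, (s : Set V)

/-- The join of two simplicial complexes (on disjoint vertex sets). -/
def joinSC {V : Type*} [DecidableEq V] (A B : Set (Finset V)) : Set (Finset V) :=
  {s | ∃ a ∈ A, ∃ b ∈ B, s = a ∪ b}

/-- `Y` is a subcomplex of `X` which is full: every face of `X` all of whose vertices
are vertices of `Y` is a face of `Y`. -/
def IsFullSub {V : Type*} (Y X : Set (Finset V)) : Prop :=
  Y ⊆ X ∧ ∀ s ∈ X, (↑s : Set V) ⊆ vertSC Y → s ∈ Y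

/-- The faces of the polyhedral join contributed by the simplex `σ`:
joins of a face of `K i` for `i ∈ σ` with a face of `L i` for `i ∉ σ`. -/
def pjFace {V : Type*} [DecidableEq V] {m : ℕ} (K L : Fin m → Set (Finset V))
    (σ : Finset (Fin m)) : Set (Finset V) :=
  {s | ∃ τ : Fin m → Finset V,
    (∀ i, τ i ∈ (if i ∈ σ then K i else L i)) ∧ s = Finset.univ.biUnion τ}

/-- The polyhedral join product `(K,L)^{*M}`. -/
def polyJoin {V : Type*} [DecidableEq V] {m : ℕ} (M : Set (Finset (Fin m)))
    (K L : Fin m → Set (Finset V)) : Set (Finset V) :=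
  ⋃ σ ∈ M, pjFace K L σ

/-- The link of a vertex. -/
def linkSC {V : Type*} [DecidableEq V] (X : Set (Finset V)) (v : V) : Set (Finset V) :=
  {τ | v ∉ τ ∧ τ ∈ X ∧ insert v τ ∈ X}

/-- The deletion (restriction) of a vertex. -/
def delSC {V : Type*} (X : Set (Finset V)) (v : V) : Set (Finset V) :=
  {τ | τ ∈ X ∧ v ∉ τ}

/-- The substitution complex `K(K_1,…,K_m)`: the polyhedral join product with
pairs `(K_i, ∅)`. -/
def substSC {V : Type*} [DecidableEq V] {m : ℕ} (M : Set (Finset (Fin m)))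
    (Ks : Fin m → Set (Finset V)) : Set (Finset V) :=
  polyJoin M Ks (fun _ => {(∅ : Finset V)})

/-- `ω` is a minimal missing face of `X` (with vertex set `S`). -/
def IsMMF {V : Type*} (X : Set (Finset V)) (S : Set V) (ω : Finset V) : Prop :=
  (↑ω : Set V) ⊆ S ∧ ω ∉ X ∧ ∀ t ⊂ ω, t ∈ X

/-- A simplicial complex is flag if every finite set of vertices which are pairwise
connected by edges is a face. -/
def IsFlag {V : Type*} [DecidableEq V] (X : Set (Finset V)) : Prop :=
  IsCx X ∧ ∀ s : Finset V, (↑s : Set V) ⊆ vertSC X →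
    (∀ u ∈ s, ∀ w ∈ s, u ≠ w → ({u, w} : Finset V) ∈ X) → s ∈ X

/-- The polyhedral join product of a join of simplicial complexes is the
join of the polyhedral join products: `(K,L)^{*(M*N)} = (K,L)^{*M} * (K,L)^{*N}`.
Here `M` is on the vertex set `{1,…,l}` and `N` on `{l+1,…,m}`; in `(K,L)^{*M}` and
`(K,L)^{*N}` the complexes `M` and `N` are regarded on the full vertex set while the
pairs at the missing indices are replaced by the trivial pair (so that they contribute
nothing to the join). -/
theorem polyJoin_join {V : Type} [DecidableEq V] {m l : ℕ}
    (M N : Set (Finset (Fin m))) (K L : Fin m → Set (Finset V))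
    (hM : IsCx M) (hN : IsCx N)
    (hMl : ∀ s ∈ M, ∀ v ∈ s, (v : ℕ) < l) (hNl : ∀ s ∈ N, ∀ v ∈ s, l ≤ (v : ℕ))
    (hK : ∀ i, IsCx (K i)) (hL : ∀ i, IsCx (L i))
    (hLK : ∀ i, L i ⊆ K i) (h0 : ∀ i, (∅ : Finset V) ∈ L i)
    (hdisj : ∀ i j, i ≠ j → Disjoint (suppSC (K i)) (suppSC (K j))) :
    polyJoin (joinSC M N) K L =
      joinSC (polyJoin M (fun i => if (i : ℕ) < l then K i else {∅})
                         (fun i => if (i : ℕ) < l then L i else {∅}))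
             (polyJoin N (fun i => if l ≤ (i : ℕ) then K i else {∅})
                         (fun i => if l ≤ (i : ℕ) then L i else {∅})) := by
  have biUnion_split : ∀ (f g h : Fin m → Finset V), (∀ i, f i = g i ∪ h i) →
      Finset.univ.biUnion f = Finset.univ.biUnion g ∪ Finset.univ.biUnion h := by
    intro f g h hfg
    ext v
    simp only [Finset.mem_biUnion, Finset.mem_union, Finset.mem_univ, true_and]
    constructor
    · rintro ⟨i, hi⟩
      rw [hfg i, Finset.mem_union] at hi
      exact hi.elim (fun hv => .inl ⟨i, hv⟩) (fun hv => .inr ⟨i, hv⟩)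
    · rintro (⟨i, hi⟩ | ⟨i, hi⟩) <;> exact ⟨i, by rw [hfg i, Finset.mem_union]; tauto⟩
  ext s
  simp only [polyJoin, Set.mem_iUnion, joinSC, Set.mem_setOf_eq, pjFace, exists_prop]
  constructor
  · rintro ⟨ρ, ⟨σ, hσ, τ, hτ, rfl⟩, f, hf, rfl⟩
    have hσl : ∀ i ∈ σ, (i : ℕ) < l := hMl σ hσ
    have hτl : ∀ i ∈ τ, l ≤ (i : ℕ) := hNl τ hτ
    refine ⟨Finset.univ.biUnion (fun i : Fin m => if (i : ℕ) < l then f i else ∅),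
      ⟨σ, hσ, fun i : Fin m => if (i : ℕ) < l then f i else ∅, fun i => ?_, rfl⟩,
      Finset.univ.biUnion (fun i : Fin m => if l ≤ (i : ℕ) then f i else ∅),
      ⟨τ, hτ, fun i : Fin m => if l ≤ (i : ℕ) then f i else ∅, fun i => ?_, rfl⟩, ?_⟩
    · by_cases hil : (i : ℕ) < l
      · have hiτ : i ∉ τ := fun hi => absurd (hτl i hi) (by omega)
        have := hf i
        by_cases hiσ : i ∈ σ <;>
          simp [hil, hiσ, hiτ, Finset.mem_union] at this ⊢ <;> exact this
      · by_cases hiσ : i ∈ σ <;> simp [hil, hiσ]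
    · by_cases hil : l ≤ (i : ℕ)
      · have hiσ : i ∉ σ := fun hi => absurd (hσl i hi) (by omega)
        have := hf i
        by_cases hiτ : i ∈ τ <;>
          simp [hil, hiσ, hiτ, Finset.mem_union] at this ⊢ <;> exact this
      · by_cases hiτ : i ∈ τ <;> simp [hil, hiτ]
    · apply biUnion_split
      intro i
      split_ifs with h1 h2 h3 <;> simp <;> omega
  · rintro ⟨a, ⟨σ, hσ, g, hg, rfl⟩, b, ⟨τ, hτ, h, hh, rfl⟩, rfl⟩
    have hσl : ∀ i ∈ σ, (i : ℕ) < l := hMl σ hσ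
    have hτl : ∀ i ∈ τ, l ≤ (i : ℕ) := hNl τ hτ
    refine ⟨σ ∪ τ, ⟨σ, hσ, τ, hτ, rfl⟩, fun i => g i ∪ h i, fun i => ?_, ?_⟩
    · by_cases hil : (i : ℕ) < l
      · have hiτ : i ∉ τ := fun hi => absurd (hτl i hi) (by omega)
        have hhi : h i = ∅ := by
          have := hh i
          simp [show ¬ l ≤ (i : ℕ) by omega] at this
          exact this
        have := hg i
        by_cases hiσ : i ∈ σ <;>
          simp [hil, hiσ, hiτ, hhi, Finset.mem_union] at this ⊢ <;> exact this
      · have hiσ : i ∉ σ := fun hi => absurd (hσl i hi) (by omega)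
        have hgi : g i = ∅ := by
          have := hg i
          simp [hil] at this
          exact this
        have := hh i
        by_cases hiτ : i ∈ τ <;>
          simp [hil, hiσ, hiτ, hgi, Finset.mem_union, show l ≤ (i:ℕ) by omega]
            at this ⊢ <;> exact this
    · exact (biUnion_split (fun i => g i ∪ h i) g h (fun i => rfl)).symm
end

section
/- For each vertex i of a simplicial complex M, there is a pushout of simplicial complexes: ((K,L)^{*lk_M(i)} * K_i) ∪ ((K,L)^{*(M∖i)} * L_i) = (K,L)^{*M}, with intersection (K,L)^{*lk_M(i)} * L_i, where lk_M(i) is regarded as a simplicial complex on the vertex set of M∖i. -/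
lemma mem_suppSC' {V : Type*} {X : Set (Finset V)} {s : Finset V} {x : V}
    (hs : s ∈ X) (hx : x ∈ s) : x ∈ suppSC X :=
  Set.mem_biUnion hs hx

lemma biUnion_update' {V : Type} [DecidableEq V] {m : ℕ} (τ : Fin m → Finset V)
    (i : Fin m) (a : Finset V) (h : τ i = ∅) :
    Finset.univ.biUnion (Function.update τ i a) = Finset.univ.biUnion τ ∪ a := by
  ext x
  simp only [Finset.mem_biUnion, Finset.mem_univ, true_and, Finset.mem_union]
  constructor
  · rintro ⟨j, hj⟩
    rcases eq_or_ne j i with rfl | hji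
    · rw [Function.update_self] at hj; exact Or.inr hj
    · rw [Function.update_of_ne hji] at hj; exact Or.inl ⟨j, hj⟩
  · rintro (⟨j, hj⟩ | hx)
    · refine ⟨j, ?_⟩
      rcases eq_or_ne j i with rfl | hji
      · simp [h] at hj
      · rwa [Function.update_of_ne hji]
    · exact ⟨i, by rwa [Function.update_self]⟩

/-- For a vertex `i` of `M` there is a pushout of simplicial complexes
`((K,L)^{*lk_M(i)} * K_i) ∪ ((K,L)^{*(M∖i)} * L_i) = (K,L)^{*M}` with intersection
`(K,L)^{*lk_M(i)} * L_i`, where `lk_M(i)` and `M∖i` are regarded on the vertex set of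
`M∖i` (the pair at the index `i` is replaced by the trivial pair). -/
theorem polyJoin_link_del_pushout {V : Type} [DecidableEq V] {m : ℕ}
    (M : Set (Finset (Fin m))) (K L : Fin m → Set (Finset V)) (i : Fin m)
    (hM : IsCx M) (hi : ({i} : Finset (Fin m)) ∈ M)
    (hK : ∀ j, IsCx (K j)) (hL : ∀ j, IsCx (L j))
    (hLK : ∀ j, L j ⊆ K j) (h0 : ∀ j, (∅ : Finset V) ∈ L j)
    (hdisj : ∀ j j', j ≠ j' → Disjoint (suppSC (K j)) (suppSC (K j'))) :
    joinSC (polyJoin (linkSC M i) (Function.update K i {(∅ : Finset V)})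
              (Function.update L i {(∅ : Finset V)})) (K i) ∪
      joinSC (polyJoin (delSC M i) (Function.update K i {(∅ : Finset V)})
              (Function.update L i {(∅ : Finset V)})) (L i) = polyJoin M K L ∧
    joinSC (polyJoin (linkSC M i) (Function.update K i {(∅ : Finset V)})
              (Function.update L i {(∅ : Finset V)})) (K i) ∩
      joinSC (polyJoin (delSC M i) (Function.update K i {(∅ : Finset V)})
              (Function.update L i {(∅ : Finset V)})) (L i) =
      joinSC (polyJoin (linkSC M i) (Function.update K i {(∅ : Finset V)})
              (Function.update L i {(∅ : Finset V)})) (L i) := by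
  classical
  -- vertices appearing in the `polyJoin` over the updated pairs avoid `suppSC (K i)`
  have hsupp : ∀ (N : Set (Finset (Fin m))) (A : Finset V),
      A ∈ polyJoin N (Function.update K i {(∅ : Finset V)})
            (Function.update L i {(∅ : Finset V)}) →
      ∀ x ∈ A, x ∉ suppSC (K i) := by
    rintro N A hA x hx hxi
    simp only [polyJoin, Set.mem_iUnion] at hA
    obtain ⟨σ, hσ, τ, hτ, rfl⟩ := hA
    rw [Finset.mem_biUnion] at hx
    obtain ⟨j, -, hxj⟩ := hx
    rcases eq_or_ne j i with rfl | hji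
    · have h1 := hτ j
      split_ifs at h1 <;> rw [Function.update_self] at h1 <;>
        simp only [Set.mem_singleton_iff] at h1 <;> rw [h1] at hxj <;>
        exact absurd hxj (Finset.notMem_empty x)
    · have hj : τ j ∈ K j := by
        have h1 := hτ j
        split_ifs at h1
        · rwa [Function.update_of_ne hji] at h1
        · rw [Function.update_of_ne hji] at h1; exact hLK j h1
      exact Set.disjoint_left.mp (hdisj j i hji) (mem_suppSC' hj hxj) hxi
  have hτempty : ∀ (σ : Finset (Fin m)) (τ : Fin m → Finset V),
      (∀ j, τ j ∈ (if j ∈ σ then Function.update K i {(∅ : Finset V)} j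
          else Function.update L i {(∅ : Finset V)} j)) → τ i = ∅ := by
    intro σ τ hτ
    have h1 := hτ i
    split_ifs at h1 <;> rw [Function.update_self] at h1 <;> exact h1
  constructor
  · ext s
    simp only [Set.mem_union, joinSC, polyJoin, Set.mem_setOf_eq, Set.mem_iUnion]
    constructor
    · rintro (⟨A, hA, a, ha, rfl⟩ | ⟨A, hA, a, ha, rfl⟩)
      · obtain ⟨σ, hσ, τ, hτ, rfl⟩ := hA
        refine ⟨insert i σ, hσ.2.2, Function.update τ i a, ?_, ?_⟩
        · intro j
          rcases eq_or_ne j i with rfl | hji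
          · rw [Function.update_self, if_pos (Finset.mem_insert_self j σ)]; exact ha
          · simpa [Function.update_of_ne hji, Finset.mem_insert, hji] using hτ j
        · exact (biUnion_update' τ i a (hτempty σ τ hτ)).symm
      · obtain ⟨σ, hσ, τ, hτ, rfl⟩ := hA
        refine ⟨σ, hσ.1, Function.update τ i a, ?_, ?_⟩
        · intro j
          rcases eq_or_ne j i with rfl | hji
          · rw [Function.update_self, if_neg hσ.2]; exact ha
          · simpa [Function.update_of_ne hji] using hτ j
        · exact (biUnion_update' τ i a (hτempty σ τ hτ)).symm
    · rintro ⟨σ, hσ, τ, hτ, rfl⟩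
      have key : Finset.univ.biUnion τ = Finset.univ.biUnion (Function.update τ i ∅) ∪ τ i := by
        have h2 := biUnion_update' (Function.update τ i ∅) i (τ i) (Function.update_self i ∅ τ)
        rwa [Function.update_idem, Function.update_eq_self] at h2
      by_cases hiσ : i ∈ σ
      · refine Or.inl ⟨Finset.univ.biUnion (Function.update τ i ∅),
          ⟨σ.erase i, ⟨Finset.notMem_erase i σ, hM hσ (Finset.erase_subset i σ),
            by rwa [Finset.insert_erase hiσ]⟩, Function.update τ i ∅, ?_, rfl⟩,
          τ i, by have h1 := hτ i; rwa [if_pos hiσ] at h1, key⟩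
        intro j
        rcases eq_or_ne j i with rfl | hji
        · simp [Finset.notMem_erase]
        · simpa [Function.update_of_ne hji, Finset.mem_erase, hji] using hτ j
      · refine Or.inr ⟨Finset.univ.biUnion (Function.update τ i ∅),
          ⟨σ, ⟨hσ, hiσ⟩, Function.update τ i ∅, ?_, rfl⟩,
          τ i, by have h1 := hτ i; rwa [if_neg hiσ] at h1, key⟩
        intro j
        rcases eq_or_ne j i with rfl | hji
        · simp [hiσ]
        · simpa [Function.update_of_ne hji] using hτ j
  · ext s
    simp only [Set.mem_inter_iff, joinSC, Set.mem_setOf_eq]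
    constructor
    · rintro ⟨⟨A, hA, a, ha, hs1⟩, ⟨B, hB, b, hb, hs2⟩⟩
      have hab : a = b := by
        ext x
        constructor
        · intro hxa
          have hxK : x ∈ suppSC (K i) := mem_suppSC' ha hxa
          have hxs : x ∈ B ∪ b := by rw [← hs2, hs1]; exact Finset.mem_union_right A hxa
          rcases Finset.mem_union.mp hxs with h | h
          · exact absurd hxK (hsupp _ B hB x h)
          · exact h
        · intro hxb
          have hxK : x ∈ suppSC (K i) := mem_suppSC' (hLK i hb) hxb
          have hxs : x ∈ A ∪ a := by rw [← hs1, hs2]; exact Finset.mem_union_right B hxb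
          rcases Finset.mem_union.mp hxs with h | h
          · exact absurd hxK (hsupp _ A hA x h)
          · exact h
      exact ⟨A, hA, a, hab ▸ hb, hs1⟩
    · rintro ⟨A, hA, a, ha, hs⟩
      refine ⟨⟨A, hA, a, hLK i ha, hs⟩, ⟨A, ?_, a, ha, hs⟩⟩
      simp only [polyJoin, Set.mem_iUnion] at hA ⊢
      obtain ⟨σ, hσ, hAf⟩ := hA
      exact ⟨σ, ⟨hσ.2.1, hσ.1⟩, hAf⟩
end

section
/- Let (K,L) be a sequence of pairs of simplicial complexes, and let (P,Q) be the sequence with (P_j, Q_j) = (K_j, L_j) for j ≠ i and (P_i, Q_i) = ({i}, ∅). Then there is an identity of simplicial complexes (K,L)^{*lk_M(i)} = lk_{(P,Q)^{*M}}(i), where lk_M(i) is considered on the vertex set of M∖i and lk_{(P,Q)^{*M}}(i) on the vertex set of ((P,Q)^{*M})∖i. -/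
lemma biUnion_update_eq' {V : Type} [DecidableEq V] {m : ℕ} (τ : Fin m → Finset V)
    (i : Fin m) (a : Finset V) (h : τ i = ∅) :
    Finset.univ.biUnion (Function.update τ i a) = a ∪ Finset.univ.biUnion τ := by
  ext x
  simp only [Finset.mem_biUnion, Finset.mem_univ, true_and, Function.update_apply,
    Finset.mem_union]
  constructor
  · rintro ⟨j, hj⟩
    by_cases hji : j = i
    · left; simpa [hji] using hj
    · right; exact ⟨j, by simpa [hji] using hj⟩
  · rintro (hx | ⟨j, hj⟩)
    · exact ⟨i, by simp [hx]⟩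
    · refine ⟨j, ?_⟩
      have hji : j ≠ i := by rintro rfl; simp [h] at hj
      simpa [hji] using hj

lemma mem_suppSC_of_mem {V : Type} {X : Set (Finset V)} {s : Finset V} {x : V}
    (hs : s ∈ X) (hx : x ∈ s) : x ∈ suppSC X := by
  exact Set.mem_iUnion₂.mpr ⟨s, hs, hx⟩

/-- Let `(P,Q)` agree with `(K,L)` except at `i`, where `(P_i,Q_i)` is the
pair consisting of the single-vertex complex `{v}` and the empty complex. Then
`(K,L)^{*lk_M(i)} = lk_{(P,Q)^{*M}}(v)`. -/
theorem polyJoin_link_eq {V : Type} [DecidableEq V] {m : ℕ}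
    (M : Set (Finset (Fin m))) (K L : Fin m → Set (Finset V)) (i : Fin m) (v : V)
    (hM : IsCx M) (hi : ({i} : Finset (Fin m)) ∈ M)
    (hK : ∀ j, IsCx (K j)) (hL : ∀ j, IsCx (L j))
    (hLK : ∀ j, L j ⊆ K j) (h0 : ∀ j, (∅ : Finset V) ∈ L j)
    (hdisj : ∀ j j', j ≠ j' → Disjoint (suppSC (K j)) (suppSC (K j')))
    (hv : ∀ j, j ≠ i → v ∉ suppSC (K j)) :
    polyJoin (linkSC M i) (Function.update K i {(∅ : Finset V)})
        (Function.update L i {(∅ : Finset V)}) =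
      linkSC (polyJoin M (Function.update K i {∅, {v}})
        (Function.update L i {(∅ : Finset V)})) v := by
  ext s
  simp only [polyJoin, Set.mem_iUnion, linkSC, Set.mem_setOf_eq, pjFace]
  constructor
  · rintro ⟨σ, ⟨hiσ, hσM, hinsσ⟩, τ, hτ, rfl⟩
    have hτi : τ i = ∅ := by
      have := hτ i
      simpa [hiσ] using this
    have hτK : ∀ j, j ≠ i → τ j ∈ K j := by
      intro j hj
      have := hτ j
      rw [Function.update_of_ne hj, Function.update_of_ne hj] at this
      split_ifs at this with h
      · exact this
      · exact hLK j this
    have hvτ : ∀ j, v ∉ τ j := by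
      intro j hvj
      by_cases hj : j = i
      · subst hj; simp [hτi] at hvj
      · exact hv j hj (mem_suppSC_of_mem (hτK j hj) hvj)
    refine ⟨?_, ⟨σ, hσM, τ, ?_, rfl⟩, ⟨insert i σ, hinsσ, Function.update τ i {v}, ?_, ?_⟩⟩
    · simp only [Finset.mem_biUnion, Finset.mem_univ, true_and, not_exists]
      exact hvτ
    · intro j
      by_cases hj : j = i
      · subst hj; simp [hiσ, hτi]
      · have := hτ j
        rw [Function.update_of_ne hj, Function.update_of_ne hj] at this ⊢
        exact this
    · intro j
      by_cases hj : j = i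
      · subst hj; simp
      · have := hτ j
        rw [Function.update_of_ne hj, Function.update_of_ne hj] at this
        rw [Function.update_of_ne hj, Function.update_of_ne hj, Function.update_of_ne hj]
        simpa [Finset.mem_insert, hj] using this
    · rw [biUnion_update_eq' τ i {v} hτi]
      exact Finset.insert_eq v _
  · rintro ⟨hvs, -, σ', hσ', τ', hτ', hins⟩
    have hτ'K : ∀ j, j ≠ i → τ' j ∈ K j := by
      intro j hj
      have := hτ' j
      rw [Function.update_of_ne hj, Function.update_of_ne hj] at this
      split_ifs at this with h
      · exact this
      · exact hLK j this
    have hvi : v ∈ τ' i := by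
      have : v ∈ Finset.univ.biUnion τ' := by rw [← hins]; exact Finset.mem_insert_self v _
      obtain ⟨j, -, hj⟩ := Finset.mem_biUnion.mp this
      by_cases hji : j = i
      · rwa [hji] at hj
      · exact absurd (mem_suppSC_of_mem (hτ'K j hji) hj) (hv j hji)
    have hiσ' : i ∈ σ' := by
      by_contra h
      have := hτ' i
      simp only [h, if_false, Function.update_self, Set.mem_singleton_iff] at this
      rw [this] at hvi
      simp at hvi
    have hτ'i : τ' i = {v} := by
      have := hτ' i
      simp only [hiσ', if_true, Function.update_self, Set.mem_insert_iff,
        Set.mem_singleton_iff] at this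
      rcases this with h | h
      · rw [h] at hvi; simp at hvi
      · exact h
    refine ⟨σ'.erase i, ⟨Finset.notMem_erase i σ', hM hσ' (Finset.erase_subset i σ'),
      by rwa [Finset.insert_erase hiσ']⟩, Function.update τ' i ∅, ?_, ?_⟩
    · intro j
      by_cases hj : j = i
      · subst hj; simp
      · have := hτ' j
        rw [Function.update_of_ne hj, Function.update_of_ne hj] at this
        rw [Function.update_of_ne hj, Function.update_of_ne hj, Function.update_of_ne hj]
        simpa [Finset.mem_erase, hj] using this
    · ext x
      simp only [Finset.mem_biUnion, Finset.mem_univ, true_and, Function.update_apply]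
      constructor
      · intro hx
        have : x ∈ Finset.univ.biUnion τ' := by
          rw [← hins]; exact Finset.mem_insert_of_mem hx
        obtain ⟨j, -, hj⟩ := Finset.mem_biUnion.mp this
        have hji : j ≠ i := by
          rintro rfl
          rw [hτ'i, Finset.mem_singleton] at hj
          exact hvs (hj ▸ hx)
        exact ⟨j, by rwa [if_neg hji]⟩
      · rintro ⟨j, hj⟩
        have hji : j ≠ i := by rintro rfl; simp at hj
        rw [if_neg hji] at hj
        have hxv : x ≠ v := by
          rintro rfl
          exact hv j hji (mem_suppSC_of_mem (hτ'K j hji) hj)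
        have : x ∈ insert v s := by
          rw [hins]
          exact Finset.mem_biUnion.mpr ⟨j, Finset.mem_univ j, hj⟩
        exact (Finset.mem_insert.mp this).resolve_left hxv
end

section
/- Every minimal missing face of the substitution complex K(K_1,...,K_m) is either a minimal missing face of one of the K_i, or a set {j_1,...,j_k} with j_l a vertex of K_{i_l} for l=1,...,k, where {i_1,...,i_k} is a minimal missing face of K; and conversely all such sets are minimal missing faces of K(K_1,...,K_m). -/
/-!
Since the supports of the `Ks i` are pairwise disjoint, a set `s` of vertices splits into its
parts `s ∩ suppSC (Ks i)`, and `s` is a face of `substSC K Ks` exactly when every part is a face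
of its factor and the set of factors that `s` meets is a face of `K`. A missing face lying in a
single factor is therefore a missing face of that factor. A minimal missing face `ω` meeting at
least two factors has all its parts in the factors (remove a vertex of another factor), so the
set `σ` of factors it meets is not in `K`; choosing one vertex of `ω` in each factor of `σ` gives
a subset of `ω` that is still missing, hence all of `ω`. Such transversals `σ.image f` are faces
exactly when `σ ∈ K`, which identifies their minimal missing faces with those of `K`.
-/

open Finset Function

section Substitution

variable {V : Type*} {m : ℕ} {Ks : Fin m → Set (Finset V)}

lemma subset_suppSC_of_mem {X : Set (Finset V)} {s : Finset V} (hs : s ∈ X) :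
    (↑s : Set V) ⊆ suppSC X :=
  fun _ hv => Set.mem_biUnion hs hv

lemma mem_suppSC_of_mem_vertSC {X : Set (Finset V)} {v : V} (hv : v ∈ vertSC X) :
    v ∈ suppSC X :=
  subset_suppSC_of_mem hv (by simp)

lemma eq_of_mem_suppSC (hdisj : Pairwise (Disjoint on fun i => suppSC (Ks i)))
    {i j : Fin m} {v : V} (hi : v ∈ suppSC (Ks i)) (hj : v ∈ suppSC (Ks j)) : i = j :=
  hdisj.eq (Set.not_disjoint_iff.2 ⟨v, hi, hj⟩)

lemma mem_vertSC_of_mem_suppSC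
    (hdisj : Pairwise (Disjoint on fun i => suppSC (Ks i)))
    {i : Fin m} {v : V} (hv : v ∈ ⋃ j, vertSC (Ks j)) (hi : v ∈ suppSC (Ks i)) :
    v ∈ vertSC (Ks i) := by
  obtain ⟨j, hj⟩ := Set.mem_iUnion.1 hv
  obtain rfl := eq_of_mem_suppSC hdisj (mem_suppSC_of_mem_vertSC hj) hi
  exact hj

lemma iUnion_vertSC_subset_iUnion_suppSC : ⋃ i, vertSC (Ks i) ⊆ ⋃ i, suppSC (Ks i) :=
  Set.iUnion_mono fun _ _ => mem_suppSC_of_mem_vertSC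

variable (Ks) in
open Classical in
noncomputable def factorPart (s : Finset V) (i : Fin m) : Finset V :=
  s.filter (· ∈ suppSC (Ks i))

variable (Ks) in
noncomputable def factorSet (s : Finset V) : Finset (Fin m) :=
  univ.filter fun i => (factorPart Ks s i).Nonempty

lemma mem_factorPart {s : Finset V} {i : Fin m} {v : V} :
    v ∈ factorPart Ks s i ↔ v ∈ s ∧ v ∈ suppSC (Ks i) := by
  classical
  simp [factorPart]

lemma mem_factorSet {s : Finset V} {i : Fin m} :
    i ∈ factorSet Ks s ↔ (factorPart Ks s i).Nonempty := by
  simp [factorSet]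

lemma factorPart_of_subset_suppSC
    (hdisj : Pairwise (Disjoint on fun i => suppSC (Ks i)))
    {s : Finset V} {i : Fin m} (hs : (↑s : Set V) ⊆ suppSC (Ks i)) (j : Fin m) :
    factorPart Ks s j = if j = i then s else ∅ := by
  ext v
  rw [mem_factorPart]
  split_ifs with hj
  · subst hj
    exact ⟨And.left, fun hv => ⟨hv, hs hv⟩⟩
  · simpa using fun hv hvj => hj (eq_of_mem_suppSC hdisj hvj (hs hv))

variable [DecidableEq V]

lemma factorPart_biUnion (hdisj : Pairwise (Disjoint on fun i => suppSC (Ks i)))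
    {τ : Fin m → Finset V} (hτ : ∀ i, (↑(τ i) : Set V) ⊆ suppSC (Ks i)) :
    factorPart Ks (univ.biUnion τ) = τ := by
  ext i v
  simp only [mem_factorPart, mem_biUnion, mem_univ, true_and]
  constructor
  · rintro ⟨⟨j, hvj⟩, hvi⟩
    obtain rfl := eq_of_mem_suppSC hdisj (hτ j hvj) hvi
    exact hvj
  · exact fun hv => ⟨⟨i, hv⟩, hτ i hv⟩

lemma biUnion_factorPart {s : Finset V} (hs : (↑s : Set V) ⊆ ⋃ i, suppSC (Ks i)) :
    univ.biUnion (factorPart Ks s) = s := by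
  ext v
  simp only [mem_biUnion, mem_univ, true_and, mem_factorPart]
  exact ⟨fun ⟨_, hv, _⟩ => hv, fun hv => (Set.mem_iUnion.1 (hs hv)).imp fun _ hi => ⟨hv, hi⟩⟩

lemma factorPart_erase_of_not_mem_suppSC {s : Finset V} {i : Fin m} {v : V}
    (hv : v ∉ suppSC (Ks i)) : factorPart Ks (s.erase v) i = factorPart Ks s i := by
  ext w
  simp only [mem_factorPart, mem_erase]
  exact ⟨fun ⟨⟨_, hw⟩, hwi⟩ => ⟨hw, hwi⟩, fun ⟨hw, hwi⟩ => ⟨⟨fun h => hv (h ▸ hwi), hw⟩, hwi⟩⟩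

lemma factorPart_image (hdisj : Pairwise (Disjoint on fun i => suppSC (Ks i)))
    {σ : Finset (Fin m)} {f : Fin m → V} (hf : ∀ i ∈ σ, f i ∈ suppSC (Ks i)) (i : Fin m) :
    factorPart Ks (σ.image f) i = if i ∈ σ then {f i} else ∅ := by
  ext v
  simp only [mem_factorPart, mem_image]
  constructor
  · rintro ⟨⟨j, hj, rfl⟩, hi⟩
    obtain rfl := eq_of_mem_suppSC hdisj (hf j hj) hi
    simp [hj]
  · split_ifs with hi
    · rintro h
      obtain rfl := mem_singleton.1 h
      exact ⟨⟨i, hi, rfl⟩, hf i hi⟩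
    · simp

lemma factorSet_image (hdisj : Pairwise (Disjoint on fun i => suppSC (Ks i)))
    {σ : Finset (Fin m)} {f : Fin m → V} (hf : ∀ i ∈ σ, f i ∈ suppSC (Ks i)) :
    factorSet Ks (σ.image f) = σ := by
  ext i
  rw [mem_factorSet, factorPart_image hdisj hf]
  split_ifs with hi <;> simp [hi]

lemma coe_image_subset_iUnion_vertSC {σ : Finset (Fin m)} {f : Fin m → V}
    (hf : ∀ i ∈ σ, f i ∈ vertSC (Ks i)) : (↑(σ.image f) : Set V) ⊆ ⋃ i, vertSC (Ks i) := by
  intro v hv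
  obtain ⟨i, hi, rfl⟩ := mem_image.1 (mem_coe.1 hv)
  exact Set.mem_iUnion.2 ⟨i, hf i hi⟩

variable {K : Set (Finset (Fin m))}

lemma mem_substSC_iff (hK : IsCx K) (h0 : ∀ i, (∅ : Finset V) ∈ Ks i)
    (hdisj : Pairwise (Disjoint on fun i => suppSC (Ks i)))
    {s : Finset V} (hs : (↑s : Set V) ⊆ ⋃ i, suppSC (Ks i)) :
    s ∈ substSC K Ks ↔ (∀ i, factorPart Ks s i ∈ Ks i) ∧ factorSet Ks s ∈ K := by
  constructor
  · intro hmem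
    obtain ⟨σ, hσ, τ, hτ, rfl⟩ := Set.mem_iUnion₂.1 hmem
    have hτσ : ∀ i, τ i ∈ Ks i ∧ (i ∉ σ → τ i = ∅) := fun i => by
      have := hτ i
      by_cases hi : i ∈ σ
      · simp only [hi, if_true] at this
        exact ⟨this, absurd hi⟩
      · simp only [hi, if_false, Set.mem_singleton_iff] at this
        exact ⟨this ▸ h0 i, fun _ => this⟩
    have hpart := factorPart_biUnion hdisj fun i => subset_suppSC_of_mem (hτσ i).1
    refine ⟨fun i => by rw [hpart]; exact (hτσ i).1, hK hσ fun i hi => ?_⟩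
    by_contra hiσ
    have hne := mem_factorSet.1 hi
    rw [hpart, (hτσ i).2 hiσ] at hne
    exact not_nonempty_empty hne
  · rintro ⟨hparts, htype⟩
    refine Set.mem_iUnion₂.2 ⟨_, htype, factorPart Ks s, fun i => ?_, (biUnion_factorPart hs).symm⟩
    split_ifs with hi
    · exact hparts i
    · simpa [not_nonempty_iff_eq_empty] using mt mem_factorSet.2 hi

lemma mem_substSC_iff_of_subset_suppSC (hK : IsCx K) (hKv : ∀ i, ({i} : Finset (Fin m)) ∈ K)
    (h0 : ∀ i, (∅ : Finset V) ∈ Ks i)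
    (hdisj : Pairwise (Disjoint on fun i => suppSC (Ks i)))
    {s : Finset V} {i : Fin m} (hs : (↑s : Set V) ⊆ suppSC (Ks i)) :
    s ∈ substSC K Ks ↔ s ∈ Ks i := by
  rw [mem_substSC_iff hK h0 hdisj (hs.trans (Set.subset_iUnion (fun j => suppSC (Ks j)) i))]
  simp only [factorPart_of_subset_suppSC hdisj hs]
  refine ⟨fun h => by simpa using h.1 i, fun h => ⟨fun j => ?_, hK (hKv i) fun j hj => ?_⟩⟩
  · split_ifs with hj
    · exact hj ▸ h
    · exact h0 j
  · by_contra hji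
    have hne := mem_factorSet.1 hj
    rw [factorPart_of_subset_suppSC hdisj hs, if_neg (mem_singleton.not.1 hji)] at hne
    exact not_nonempty_empty hne

lemma image_mem_substSC_iff (hK : IsCx K) (h0 : ∀ i, (∅ : Finset V) ∈ Ks i)
    (hdisj : Pairwise (Disjoint on fun i => suppSC (Ks i)))
    {σ : Finset (Fin m)} {f : Fin m → V} (hf : ∀ i ∈ σ, f i ∈ vertSC (Ks i)) :
    σ.image f ∈ substSC K Ks ↔ σ ∈ K := by
  have hfsupp i hi := mem_suppSC_of_mem_vertSC (hf i hi)
  rw [mem_substSC_iff hK h0 hdisj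
      ((coe_image_subset_iUnion_vertSC hf).trans iUnion_vertSC_subset_iUnion_suppSC),
    factorSet_image hdisj hfsupp, and_iff_right_iff_imp]
  intro _ i
  rw [factorPart_image hdisj hfsupp]
  split_ifs with hi
  · exact hf i hi
  · exact h0 i

lemma isMMF_substSC_iff_of_subset_vertSC (hK : IsCx K)
    (hKv : ∀ i, ({i} : Finset (Fin m)) ∈ K) (h0 : ∀ i, (∅ : Finset V) ∈ Ks i)
    (hdisj : Pairwise (Disjoint on fun i => suppSC (Ks i)))
    {ω : Finset V} {i : Fin m} (hω : (↑ω : Set V) ⊆ vertSC (Ks i)) :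
    IsMMF (substSC K Ks) (⋃ j, vertSC (Ks j)) ω ↔ IsMMF (Ks i) (vertSC (Ks i)) ω := by
  have hmem {t : Finset V} (ht : t ⊆ ω) : t ∈ substSC K Ks ↔ t ∈ Ks i :=
    mem_substSC_iff_of_subset_suppSC hK hKv h0 hdisj
      fun v hv => mem_suppSC_of_mem_vertSC (hω (ht hv))
  have hω' := hω.trans (Set.subset_iUnion (fun j => vertSC (Ks j)) i)
  exact ⟨fun ⟨_, hnot, hmin⟩ => ⟨hω, (hmem subset_rfl).not.1 hnot,
      fun t ht => (hmem ht.1).1 (hmin t ht)⟩,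
    fun ⟨_, hnot, hmin⟩ => ⟨hω', (hmem subset_rfl).not.2 hnot,
      fun t ht => (hmem ht.1).2 (hmin t ht)⟩⟩

lemma isMMF_substSC_image_iff (hK : IsCx K) (h0 : ∀ i, (∅ : Finset V) ∈ Ks i)
    (hdisj : Pairwise (Disjoint on fun i => suppSC (Ks i)))
    {σ : Finset (Fin m)} {f : Fin m → V} (hf : ∀ i ∈ σ, f i ∈ vertSC (Ks i)) :
    IsMMF (substSC K Ks) (⋃ i, vertSC (Ks i)) (σ.image f) ↔ IsMMF K Set.univ σ := by
  have hmem {τ : Finset (Fin m)} (hτ : τ ⊆ σ) : τ.image f ∈ substSC K Ks ↔ τ ∈ K :=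
    image_mem_substSC_iff hK h0 hdisj fun i hi => hf i (hτ hi)
  have hinj {τ : Finset (Fin m)} (hτ : τ ⊆ σ) (h : τ.image f = σ.image f) : τ = σ := by
    have hfsupp i hi := mem_suppSC_of_mem_vertSC (hf i hi)
    rw [← factorSet_image hdisj hfsupp, ← h, factorSet_image hdisj fun i hi => hfsupp i (hτ hi)]
  refine ⟨fun ⟨_, hnot, hmin⟩ => ⟨Set.subset_univ _, (hmem subset_rfl).not.1 hnot, ?_⟩,
    fun ⟨_, hnot, hmin⟩ => ⟨coe_image_subset_iUnion_vertSC hf, (hmem subset_rfl).not.2 hnot, ?_⟩⟩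
  · intro τ hτ
    exact (hmem hτ.1).1 (hmin _ ((image_subset_image hτ.1).ssubset_of_ne
      fun h => hτ.ne (hinj hτ.1 h)))
  · intro t ht
    obtain ⟨τ, hτσ, rfl⟩ := subset_image_iff.1 ht.1
    exact (hmem hτσ).2 (hmin τ (hτσ.ssubset_of_ne fun h => ht.ne (by rw [h])))

lemma exists_eq_image_of_isMMF_substSC (hK : IsCx K) (h0 : ∀ i, (∅ : Finset V) ∈ Ks i)
    (hdisj : Pairwise (Disjoint on fun i => suppSC (Ks i)))
    {ω : Finset V} (hω : IsMMF (substSC K Ks) (⋃ i, vertSC (Ks i)) ω)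
    (hspread : ∀ i, ∃ v ∈ ω, v ∉ suppSC (Ks i)) :
    ∃ (σ : Finset (Fin m)) (f : Fin m → V), (∀ i ∈ σ, f i ∈ vertSC (Ks i)) ∧ ω = σ.image f := by
  obtain ⟨hvert, hnot, hmin⟩ := hω
  have hsupp {t : Finset V} (ht : t ⊆ ω) : (↑t : Set V) ⊆ ⋃ i, suppSC (Ks i) :=
    ((coe_subset.2 ht).trans hvert).trans iUnion_vertSC_subset_iUnion_suppSC
  have hparts i : factorPart Ks ω i ∈ Ks i := by
    obtain ⟨v, hv, hvi⟩ := hspread i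
    rw [← factorPart_erase_of_not_mem_suppSC hvi]
    exact ((mem_substSC_iff hK h0 hdisj (hsupp (erase_subset v ω))).1
      (hmin _ (erase_ssubset hv))).1 i
  have htype : factorSet Ks ω ∉ K := fun h => hnot ((mem_substSC_iff hK h0 hdisj
    (hsupp subset_rfl)).2 ⟨hparts, h⟩)
  -- `g` is only relevant on `factorSet Ks ω`, but `V` may be empty: elsewhere `hspread` supplies
  -- a value.
  have hpick i : ∃ v ∈ ω, i ∈ factorSet Ks ω → v ∈ factorPart Ks ω i := by
    by_cases hi : i ∈ factorSet Ks ω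
    · obtain ⟨v, hv⟩ := mem_factorSet.1 hi
      exact ⟨v, (mem_factorPart.1 hv).1, fun _ => hv⟩
    · obtain ⟨v, hv, -⟩ := hspread i
      exact ⟨v, hv, fun h => absurd h hi⟩
  choose g hgω hg using hpick
  have hgvert i (hi : i ∈ factorSet Ks ω) : g i ∈ vertSC (Ks i) :=
    mem_vertSC_of_mem_suppSC hdisj (hvert (hgω i)) (mem_factorPart.1 (hg i hi)).2
  have hsub : (factorSet Ks ω).image g ⊆ ω := fun v hv => by
    obtain ⟨i, -, rfl⟩ := mem_image.1 hv
    exact hgω i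
  refine ⟨factorSet Ks ω, g, hgvert, (eq_of_subset_of_not_ssubset hsub fun hss => ?_).symm⟩
  exact (image_mem_substSC_iff hK h0 hdisj hgvert).not.2 htype (hmin _ hss)

end Substitution

theorem substSC_minimal_missing_faces_general {V : Type} [DecidableEq V] {m : ℕ}
    (K : Set (Finset (Fin m))) (Ks : Fin m → Set (Finset V))
    (hK : IsCx K) (hKv : ∀ i, ({i} : Finset (Fin m)) ∈ K)
    (h0 : ∀ i, (∅ : Finset V) ∈ Ks i)
    (hdisj : ∀ i j, i ≠ j → Disjoint (suppSC (Ks i)) (suppSC (Ks j)))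
    (ω : Finset V) :
    IsMMF (substSC K Ks) (⋃ i, vertSC (Ks i)) ω ↔
      ((∃ i, IsMMF (Ks i) (vertSC (Ks i)) ω) ∨
        (∃ σ : Finset (Fin m), IsMMF K Set.univ σ ∧
          ∃ f : Fin m → V, (∀ i ∈ σ, f i ∈ vertSC (Ks i)) ∧ ω = σ.image f)) := by
  constructor
  · intro hω
    by_cases hsingle : ∃ i, (↑ω : Set V) ⊆ suppSC (Ks i)
    · obtain ⟨i, hi⟩ := hsingle
      have hωi : (↑ω : Set V) ⊆ vertSC (Ks i) :=
        fun v hv => mem_vertSC_of_mem_suppSC hdisj (hω.1 hv) (hi hv)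
      exact Or.inl ⟨i, (isMMF_substSC_iff_of_subset_vertSC hK hKv h0 hdisj hωi).1 hω⟩
    · push Not at hsingle
      obtain ⟨σ, f, hf, rfl⟩ := exists_eq_image_of_isMMF_substSC hK h0 hdisj hω
        fun i => Set.not_subset.1 (hsingle i)
      exact Or.inr ⟨σ, (isMMF_substSC_image_iff hK h0 hdisj hf).1 hω, f, hf, rfl⟩
  · rintro (⟨i, hi⟩ | ⟨σ, hσ, f, hf, rfl⟩)
    · exact (isMMF_substSC_iff_of_subset_vertSC hK hKv h0 hdisj hi.1).2 hi
    · exact (isMMF_substSC_image_iff hK h0 hdisj hf).2 hσ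

/-- The minimal missing faces of the substitution complex `K(K_1,…,K_m)`
are exactly: the minimal missing faces of the `K_i`, together with the sets
`{j_1,…,j_k}` with `j_l` a vertex of `K_{i_l}`, where `{i_1,…,i_k}` ranges over the
minimal missing faces of `K`. -/
theorem substSC_minimal_missing_faces {V : Type} [DecidableEq V] {m : ℕ}
    (K : Set (Finset (Fin m))) (Ks : Fin m → Set (Finset V))
    (hK : IsCx K) (hKe : (∅ : Finset (Fin m)) ∈ K) (hKv : ∀ i, ({i} : Finset (Fin m)) ∈ K)
    (hKs : ∀ i, IsCx (Ks i)) (h0 : ∀ i, (∅ : Finset V) ∈ Ks i)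
    (hne : ∀ i, (vertSC (Ks i)).Nonempty)
    (hdisj : ∀ i j, i ≠ j → Disjoint (suppSC (Ks i)) (suppSC (Ks j)))
    (ω : Finset V) :
    IsMMF (substSC K Ks) (⋃ i, vertSC (Ks i)) ω ↔
      ((∃ i, IsMMF (Ks i) (vertSC (Ks i)) ω) ∨
        (∃ σ : Finset (Fin m), IsMMF K Set.univ σ ∧
          ∃ f : Fin m → V, (∀ i ∈ σ, f i ∈ vertSC (Ks i)) ∧ ω = σ.image f)) :=
  substSC_minimal_missing_faces_general K Ks hK hKv h0 hdisj ω
end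

section
/- If K is a simplicial complex on [m] that is not flag, then for any simplicial complexes K_1,...,K_m (each with at least one vertex), the substitution complex K(K_1,...,K_m) is not flag. -/
/-- If `K` is not flag, then for any simplicial complexes `K_1,…,K_m`
(each with at least one vertex), the substitution complex `K(K_1,…,K_m)` is not flag. -/
theorem substSC_not_flag_of_not_flag {V : Type} [DecidableEq V] {m : ℕ}
    (K : Set (Finset (Fin m))) (Ks : Fin m → Set (Finset V))
    (hK : IsCx K) (hKe : (∅ : Finset (Fin m)) ∈ K) (hKv : ∀ i, ({i} : Finset (Fin m)) ∈ K)
    (hKs : ∀ i, IsCx (Ks i)) (h0 : ∀ i, (∅ : Finset V) ∈ Ks i)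
    (hne : ∀ i, (vertSC (Ks i)).Nonempty)
    (hdisj : ∀ i j, i ≠ j → Disjoint (suppSC (Ks i)) (suppSC (Ks j)))
    (hnotflag : ¬ IsFlag K) :
    ¬ IsFlag (substSC K Ks) := by
  intro hflag
  apply hnotflag
  choose v hv using hne
  have hvsupp : ∀ i, v i ∈ suppSC (Ks i) := by
    intro i
    exact Set.mem_biUnion (hv i) (by simp)
  have hvinj : Function.Injective v := by
    intro i j hij
    by_contra h
    exact (hdisj i j h).ne_of_mem (hvsupp i) (hij ▸ hvsupp j) rfl
  -- forward direction
  have hfwd : ∀ σ ∈ K, σ.image v ∈ substSC K Ks := by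
    intro σ hσ
    refine Set.mem_biUnion hσ ?_
    refine ⟨fun i => if i ∈ σ then {v i} else ∅, ?_, ?_⟩
    · intro i
      by_cases h : i ∈ σ <;> simp only [h, if_pos, if_neg, if_true, if_false]
      · exact hv i
      · simp
    · ext x
      simp only [Finset.mem_image, Finset.mem_biUnion, Finset.mem_univ, true_and]
      constructor
      · rintro ⟨i, hi, rfl⟩
        exact ⟨i, by simp [hi]⟩
      · rintro ⟨i, hi⟩
        by_cases h : i ∈ σ
        · simp only [h, if_true, Finset.mem_singleton] at hi
          exact ⟨i, h, hi.symm⟩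
        · simp [h] at hi
  -- backward direction
  have hbwd : ∀ σ : Finset (Fin m), σ.image v ∈ substSC K Ks → σ ∈ K := by
    intro σ hσ
    obtain ⟨ρ, hρ, τ, hτ, heq⟩ := by
      simpa only [substSC, polyJoin, Set.mem_iUnion, pjFace, Set.mem_setOf_eq] using hσ
    refine hK hρ ?_
    intro i hi
    have hvi : v i ∈ Finset.univ.biUnion τ := by
      rw [← heq]; exact Finset.mem_image_of_mem v hi
    obtain ⟨j, -, hj⟩ := Finset.mem_biUnion.mp hvi
    by_cases hjρ : j ∈ ρ
    · have hτj : τ j ∈ Ks j := by have := hτ j; rwa [if_pos hjρ] at this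
      have hsupp : v i ∈ suppSC (Ks j) := Set.mem_biUnion hτj hj
      by_cases hij : i = j
      · exact hij ▸ hjρ
      · exact absurd rfl ((hdisj i j hij).ne_of_mem (hvsupp i) hsupp)
    · have hτj : τ j = ∅ := by
        have := hτ j; rw [if_neg hjρ] at this; simpa using this
      simp [hτj] at hj
  refine ⟨hK, fun s hs hedge => ?_⟩
  apply hbwd
  apply hflag.2
  · intro x hx
    simp only [Finset.coe_image, Set.mem_image, Finset.mem_coe] at hx
    obtain ⟨i, hi, rfl⟩ := hx
    have : ({i} : Finset (Fin m)).image v ∈ substSC K Ks := hfwd _ (hKv i)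
    simpa [vertSC] using this
  · intro x hx y hy hxy
    simp only [Finset.mem_image] at hx hy
    obtain ⟨i, hi, rfl⟩ := hx
    obtain ⟨j, hj, rfl⟩ := hy
    have hij : i ≠ j := fun h => hxy (by rw [h])
    have : ({i, j} : Finset (Fin m)).image v ∈ substSC K Ks :=
      hfwd _ (hedge i hi j hj hij)
    simpa [Finset.image_insert] using this
end
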